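/- Let H be a graph with vertex set {v_1,…,v_z}, let ρ⃗ be a fracture of H, and let s_1,…,s_z be signatures. Define coeff_{H,s⃗}(ρ⃗) := ∑_{σ⃗ ≤ ρ⃗} μ⃗(σ⃗,ρ⃗) · ∏_{i=1}^z ∏_{B ∈ σ⃗(v_i)} s_i(|B|)/s_i(0), where the sum is over all fractures σ⃗ with σ⃗(v_i) refining ρ⃗(v_i) for every i, and μ⃗(σ⃗,ρ⃗) := ∏_{i=1}^z μ(σ⃗(v_i), ρ⃗(v_i)). Then coeff_{H,s⃗}(ρ⃗) = ∏_{i=1}^z ∏_{B ∈ ρ⃗(v_i)} χ(|B|, s_i). -/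

import Mathlib

/-!
Both sides factor over the vertices, so it is enough to fix one partition `ρ` of a finite set `t`.
A partition `σ` refining `ρ` amounts to an independent choice of a partition `σ_B` of every
block `B ∈ ρ`, and the weight `μ(σ,ρ) · ∏_{A ∈ σ} s(|A|)/s(0)` factors as the product over
`B ∈ ρ` of the summand of `χ(|B|, s)` at `σ_B`. Hence the sum over `σ` is the product over `B` of
the sum over partitions of `B`, which is `χ(|B|, s)` because that sum only depends on `|B|`.
-/

open Finset

/-- `P` is a set partition of the finite set `s`. -/
def IsPartitionOf {α : Type*} [DecidableEq α] (s : Finset α) (P : Finset (Finset α)) : Prop :=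
  ∅ ∉ P ∧ (∀ B ∈ P, B ⊆ s) ∧ ∀ a ∈ s, ∃! B, B ∈ P ∧ a ∈ B

open Classical in
noncomputable def partitionsOf {α : Type*} [DecidableEq α] (s : Finset α) :
    Finset (Finset (Finset α)) :=
  s.powerset.powerset.filter (IsPartitionOf s)

/-- The fingerprint `χ(d, s)` of a signature `s`. -/
noncomputable def chi (s : ℕ → ℂ) (d : ℕ) : ℂ :=
  ∑ P ∈ partitionsOf (Finset.univ : Finset (Fin d)),
    (-1 : ℂ) ^ (P.card - 1) * ((P.card - 1).factorial : ℂ) * ∏ B ∈ P, s B.card / s 0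

variable {V : Type*} [Fintype V] [DecidableEq V]

/-- The set `E(v)` of edges of `H` incident to the vertex `v`. -/
def incEdges (H : SimpleGraph V) [DecidableRel H.Adj] (v : V) : Finset (Sym2 V) :=
  H.edgeFinset.filter fun e => v ∈ e

open Classical in
/-- The finset of all fractures of `H`: tuples assigning to each vertex `v` a set partition of
the edges incident to `v`. -/
noncomputable def fracturesFinset (H : SimpleGraph V) [DecidableRel H.Adj] :
    Finset (V → Finset (Finset (Sym2 V))) :=
  (Fintype.piFinset fun v => (incEdges H v).powerset.powerset).filter fun σ =>
    ∀ v, IsPartitionOf (incEdges H v) (σ v)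

section PartitionSums

variable {γ δ : Type*} [DecidableEq γ] [DecidableEq δ] {t : Finset γ} {P σ ρ : Finset (Finset γ)}

lemma mem_partitionsOf : P ∈ partitionsOf t ↔ IsPartitionOf t P := by
  simp only [partitionsOf, mem_filter, mem_powerset, and_iff_right_iff_imp]
  exact fun h B hB => mem_powerset.2 (h.2.1 B hB)

lemma IsPartitionOf.eq_of_mem_of_mem (hP : IsPartitionOf t P) {B₁ B₂ : Finset γ} (h₁ : B₁ ∈ P)
    (h₂ : B₂ ∈ P) {a : γ} (ha₁ : a ∈ B₁) (ha₂ : a ∈ B₂) : B₁ = B₂ :=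
  (hP.2.2 a (hP.2.1 B₁ h₁ ha₁)).unique ⟨h₁, ha₁⟩ ⟨h₂, ha₂⟩

lemma isPartitionOf_map_iff (f : γ ↪ δ) :
    IsPartitionOf (t.map f) (P.map (mapEmbedding f).toEmbedding) ↔ IsPartitionOf t P := by
  simp only [IsPartitionOf, ExistsUnique, mem_map, forall_exists_index, and_imp,
    forall_apply_eq_imp_iff₂]
  simp

lemma partitionsOf_map (f : γ ↪ δ) (t : Finset γ) :
    partitionsOf (t.map f) =
      (partitionsOf t).map (mapEmbedding (mapEmbedding f).toEmbedding).toEmbedding := by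
  ext Q
  simp only [mem_map, RelEmbedding.coe_toEmbedding, mapEmbedding_apply, mem_partitionsOf]
  constructor
  · intro hQ
    have hpreimage : ∀ B ∈ Q, (t.filter (f · ∈ B)).map f = B := fun B hB => by
      rw [← show (t.map f).filter (· ∈ B) = (t.filter (f · ∈ B)).map f from filter_map,
        filter_mem_eq_inter, inter_eq_right.2 (hQ.2.1 B hB)]
    have hQ_eq : (Q.image fun B => t.filter (f · ∈ B)).map (mapEmbedding f).toEmbedding = Q := by
      rw [map_eq_image, image_image]
      exact (image_congr hpreimage).trans image_id
    exact ⟨_, (isPartitionOf_map_iff f).1 (by rwa [hQ_eq]), hQ_eq⟩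
  · rintro ⟨P, hP, rfl⟩
    exact (isPartitionOf_map_iff f).2 hP

noncomputable def chiTerm (s : ℕ → ℂ) (P : Finset (Finset γ)) : ℂ :=
  (-1 : ℂ) ^ (P.card - 1) * ((P.card - 1).factorial : ℂ) * ∏ A ∈ P, s A.card / s 0

lemma sum_partitionsOf_chiTerm (s : ℕ → ℂ) (t : Finset γ) :
    ∑ P ∈ partitionsOf t, chiTerm s P = chi s t.card := by
  set f : Fin t.card ↪ γ := t.equivFin.symm.toEmbedding.trans (Function.Embedding.subtype _)
  have ht : (univ : Finset (Fin t.card)).map f = t := by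
    rw [← map_map, map_univ_equiv, ← attach_eq_univ, attach_map_val]
  rw [chi]
  conv_lhs => rw [← ht, partitionsOf_map, sum_map]
  simp only [chiTerm, card_map, prod_map, RelEmbedding.coe_toEmbedding, mapEmbedding_apply]

lemma IsPartitionOf.filter_subset_of_refines (hσ : IsPartitionOf t σ) (hρ : IsPartitionOf t ρ)
    (href : ∀ A ∈ σ, ∃ B ∈ ρ, A ⊆ B) {B : Finset γ} (hB : B ∈ ρ) :
    IsPartitionOf B (σ.filter (· ⊆ B)) := by
  refine ⟨fun h => hσ.1 (mem_filter.1 h).1, fun A hA => (mem_filter.1 hA).2, fun a ha => ?_⟩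
  obtain ⟨A, ⟨hA, haA⟩, hunique⟩ := hσ.2.2 a (hρ.2.1 B hB ha)
  obtain ⟨B', hB', hAB'⟩ := href A hA
  obtain rfl : B' = B := hρ.eq_of_mem_of_mem hB' hB (hAB' haA) ha
  exact ⟨A, ⟨mem_filter.2 ⟨hA, hAB'⟩, haA⟩,
    fun A' hA' => hunique A' ⟨(mem_filter.1 hA'.1).1, hA'.2⟩⟩

lemma biUnion_filter_subset_of_refines (href : ∀ A ∈ σ, ∃ B ∈ ρ, A ⊆ B) :
    ρ.biUnion (fun B => σ.filter (· ⊆ B)) = σ := by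
  ext A
  simp only [mem_biUnion, mem_filter]
  exact ⟨fun ⟨_, _, hA, _⟩ => hA, fun hA => (href A hA).imp fun _ ⟨hB, hAB⟩ => ⟨hB, hA, hAB⟩⟩

lemma pairwiseDisjoint_filter_subset (hσ : ∅ ∉ σ) (hρ : IsPartitionOf t ρ) :
    (ρ : Set (Finset γ)).PairwiseDisjoint (fun B => σ.filter (· ⊆ B)) := by
  intro B₁ h₁ B₂ h₂ hne
  refine disjoint_left.2 fun A hA₁ hA₂ => ?_
  obtain ⟨hA, hAB₁⟩ := mem_filter.1 hA₁
  obtain ⟨a, ha⟩ := nonempty_iff_ne_empty.2 (ne_of_mem_of_not_mem hA hσ)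
  exact hne (hρ.eq_of_mem_of_mem h₁ h₂ (hAB₁ ha) ((mem_filter.1 hA₂).2 ha))

lemma mobius_mul_prod_eq_prod_chiTerm (s : ℕ → ℂ) (hσ : ∅ ∉ σ) (hρ : IsPartitionOf t ρ)
    (href : ∀ A ∈ σ, ∃ B ∈ ρ, A ⊆ B) :
    (∏ B ∈ ρ, (-1 : ℂ) ^ ((σ.filter (· ⊆ B)).card - 1) *
        (((σ.filter (· ⊆ B)).card - 1).factorial : ℂ)) * ∏ A ∈ σ, s A.card / s 0 =
      ∏ B ∈ ρ, chiTerm s (σ.filter (· ⊆ B)) := by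
  have hsplit : ∏ A ∈ σ, s A.card / s 0 = ∏ B ∈ ρ, ∏ A ∈ σ.filter (· ⊆ B), s A.card / s 0 := by
    rw [← prod_biUnion (pairwiseDisjoint_filter_subset hσ hρ),
      biUnion_filter_subset_of_refines href]
  rw [hsplit, ← prod_mul_distrib]
  rfl

section Gluing

variable {p : ∀ B ∈ ρ, Finset (Finset γ)}

lemma IsPartitionOf.biUnion (hρ : IsPartitionOf t ρ)
    (hp : ∀ B (hB : B ∈ ρ), IsPartitionOf B (p B hB)) :
    IsPartitionOf t (ρ.attach.biUnion fun B => p B.1 B.2) := by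
  simp only [IsPartitionOf, mem_biUnion, mem_attach, true_and, Subtype.exists, not_exists]
  refine ⟨fun B hB h => (hp B hB).1 h,
    fun A ⟨B, hB, hA⟩ => ((hp B hB).2.1 A hA).trans (hρ.2.1 B hB), fun a ha => ?_⟩
  obtain ⟨B, ⟨hB, haB⟩, -⟩ := hρ.2.2 a ha
  obtain ⟨A, ⟨hA, haA⟩, hunique⟩ := (hp B hB).2.2 a haB
  refine ⟨A, ⟨⟨B, hB, hA⟩, haA⟩, fun A' ⟨⟨B', hB', hA'⟩, haA'⟩ => ?_⟩
  obtain rfl : B' = B := hρ.eq_of_mem_of_mem hB' hB ((hp B' hB').2.1 A' hA' haA') haB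
  exact hunique A' ⟨hA', haA'⟩

lemma filter_subset_biUnion (hρ : IsPartitionOf t ρ)
    (hp : ∀ B (hB : B ∈ ρ), IsPartitionOf B (p B hB)) {B : Finset γ} (hB : B ∈ ρ) :
    (ρ.attach.biUnion fun B => p B.1 B.2).filter (· ⊆ B) = p B hB := by
  ext A
  simp only [mem_filter, mem_biUnion, mem_attach, true_and, Subtype.exists]
  refine ⟨fun ⟨⟨B', hB', hA⟩, hAB⟩ => ?_, fun hA => ⟨⟨B, hB, hA⟩, (hp B hB).2.1 A hA⟩⟩
  obtain ⟨a, ha⟩ := nonempty_iff_ne_empty.2 (ne_of_mem_of_not_mem hA (hp B' hB').1)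
  obtain rfl : B' = B := hρ.eq_of_mem_of_mem hB' hB ((hp B' hB').2.1 A hA ha) (hAB ha)
  exact hA

end Gluing

-- Not the default instance: for a fintype `γ`, as in the application to edges of a graph,
-- elaboration decides the predicate through `Fintype.decidableForallFintype`.
variable [DecidablePred fun σ : Finset (Finset γ) => ∀ A ∈ σ, ∃ B ∈ ρ, A ⊆ B]

theorem sum_refinements_prod_eq_prod_sum {M : Type*} [CommSemiring M] (hρ : IsPartitionOf t ρ)
    (w : Finset γ → Finset (Finset γ) → M) :
    ∑ σ ∈ (partitionsOf t).filter (fun σ => ∀ A ∈ σ, ∃ B ∈ ρ, A ⊆ B),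
      ∏ B ∈ ρ, w B (σ.filter (· ⊆ B)) = ∏ B ∈ ρ, ∑ P ∈ partitionsOf B, w B P := by
  rw [prod_sum]
  refine sum_nbij' (fun σ B _ => σ.filter (· ⊆ B)) (fun p => ρ.attach.biUnion fun B => p B.1 B.2)
    ?_ ?_ ?_ ?_ ?_
  · simp only [mem_filter, mem_partitionsOf, mem_pi]
    exact fun σ ⟨hσ, href⟩ B hB => hσ.filter_subset_of_refines hρ href hB
  · simp only [mem_pi, mem_partitionsOf, mem_filter, mem_biUnion, mem_attach, true_and,
      Subtype.exists]
    exact fun p hp => ⟨hρ.biUnion hp, fun A ⟨B, hB, hA⟩ => ⟨B, hB, (hp B hB).2.1 A hA⟩⟩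
  · intro σ hσ
    exact attach_biUnion.trans (biUnion_filter_subset_of_refines (mem_filter.1 hσ).2)
  · intro p hp
    simp only [mem_pi, mem_partitionsOf] at hp
    exact funext₂ fun B hB => filter_subset_biUnion hρ hp hB
  · exact fun σ _ => (prod_attach ρ _).symm

theorem sum_refinements_mobius_mul_prod_eq_prod_chi (s : ℕ → ℂ) (hρ : IsPartitionOf t ρ) :
    ∑ σ ∈ (partitionsOf t).filter (fun σ => ∀ A ∈ σ, ∃ B ∈ ρ, A ⊆ B),
      (∏ B ∈ ρ, (-1 : ℂ) ^ ((σ.filter (· ⊆ B)).card - 1) *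
        (((σ.filter (· ⊆ B)).card - 1).factorial : ℂ)) * ∏ A ∈ σ, s A.card / s 0 =
      ∏ B ∈ ρ, chi s B.card := by
  rw [sum_congr rfl fun σ hσ => mobius_mul_prod_eq_prod_chiTerm s
    (mem_partitionsOf.1 (mem_filter.1 hσ).1).1 hρ (mem_filter.1 hσ).2,
    sum_refinements_prod_eq_prod_sum hρ]
  exact prod_congr rfl fun B _ => sum_partitionsOf_chiTerm s B

end PartitionSums

lemma filter_fracturesFinset_refines (H : SimpleGraph V) [DecidableRel H.Adj]
    (ρ : V → Finset (Finset (Sym2 V))) :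
    (fracturesFinset H).filter (fun σ => ∀ v, ∀ A ∈ σ v, ∃ B ∈ ρ v, A ⊆ B) =
      Fintype.piFinset fun v =>
        (partitionsOf (incEdges H v)).filter fun σ => ∀ A ∈ σ, ∃ B ∈ ρ v, A ⊆ B := by
  ext σ
  simp only [fracturesFinset, partitionsOf, mem_filter, Fintype.mem_piFinset, forall_and, and_assoc]

open Classical in
theorem stmt4_general (H : SimpleGraph V) [DecidableRel H.Adj]
    (ρ : V → Finset (Finset (Sym2 V)))
    (hρ : ∀ v, IsPartitionOf (incEdges H v) (ρ v))
    (s : V → ℕ → ℂ) :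
    (∑ σ ∈ (fracturesFinset H).filter (fun σ => ∀ v, ∀ A ∈ σ v, ∃ B ∈ ρ v, A ⊆ B),
        (∏ v : V, ∏ B ∈ ρ v,
            (-1 : ℂ) ^ (((σ v).filter fun A => A ⊆ B).card - 1) *
              ((((σ v).filter fun A => A ⊆ B).card - 1).factorial : ℂ)) *
          ∏ v : V, ∏ A ∈ σ v, s v A.card / s v 0)
      = ∏ v : V, ∏ B ∈ ρ v, chi (s v) B.card := by
  rw [filter_fracturesFinset_refines,
    ← prod_congr rfl fun v _ => sum_refinements_mobius_mul_prod_eq_prod_chi (s v) (hρ v),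
    prod_univ_sum]
  exact sum_congr rfl fun σ _ => prod_mul_distrib.symm

open Classical in
/-- for a graph `H` (without isolated vertices), a fracture `ρ⃗` of `H` and
signatures `s_v` for the vertices,
`coeff_{H,s⃗}(ρ⃗) = ∑_{σ⃗ ≤ ρ⃗} μ⃗(σ⃗,ρ⃗)·∏_v ∏_{B∈σ⃗(v)} s_v(|B|)/s_v(0)`
equals `∏_v ∏_{B∈ρ⃗(v)} χ(|B|, s_v)`, where
`μ⃗(σ⃗,ρ⃗) = ∏_v μ(σ⃗(v),ρ⃗(v))` and
`μ(σ,ρ) = ∏_{B∈ρ} (−1)^{|σ_B|−1}(|σ_B|−1)!` with `σ_B` the blocks of `σ` contained in `B`. -/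
theorem stmt4 (H : SimpleGraph V) [DecidableRel H.Adj]
    (hnoiso : ∀ v : V, ∃ u, H.Adj v u)
    (ρ : V → Finset (Finset (Sym2 V)))
    (hρ : ∀ v, IsPartitionOf (incEdges H v) (ρ v))
    (s : V → ℕ → ℂ) (hs : ∀ v, s v 0 ≠ 0) :
    (∑ σ ∈ (fracturesFinset H).filter (fun σ => ∀ v, ∀ A ∈ σ v, ∃ B ∈ ρ v, A ⊆ B),
        (∏ v : V, ∏ B ∈ ρ v,
            (-1 : ℂ) ^ (((σ v).filter fun A => A ⊆ B).card - 1) *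
              ((((σ v).filter fun A => A ⊆ B).card - 1).factorial : ℂ)) *
          ∏ v : V, ∏ A ∈ σ v, s v A.card / s v 0)
      = ∏ v : V, ∏ B ∈ ρ v, chi (s v) B.card :=
  stmt4_general H ρ hρ s
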